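/- Let r₁ : C₁ → B, r₂ : C₂ → B be surjective chain maps of finite-dimensional Hilbert cochain complexes which are partial isometries (r_j r_j* = id), and let β_θ : C₁ ⊕_θ C₂ → C₂, β_θ(ξ₁,ξ₂) = ξ₂, for 0 < θ < π/2. Then det(β_θ β_θ* : C₂^j → C₂^j) = (1 + tan²θ)^{−dim B^j} for every j. -/

import Mathlib

noncomputable section

section

variable (C₁ C₂ B : ℕ → Type)
  [∀ j, NormedAddCommGroup (C₁ j)] [∀ j, InnerProductSpace ℂ (C₁ j)]
  [∀ j, FiniteDimensional ℂ (C₁ j)]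
  [∀ j, NormedAddCommGroup (C₂ j)] [∀ j, InnerProductSpace ℂ (C₂ j)]
  [∀ j, FiniteDimensional ℂ (C₂ j)]
  [∀ j, NormedAddCommGroup (B j)] [∀ j, InnerProductSpace ℂ (B j)]
  [∀ j, FiniteDimensional ℂ (B j)]

/-- The orthogonal direct sum `C₁ ⊕ C₂` in degree `j`. -/
abbrev SumC (j : ℕ) : Type := WithLp 2 (C₁ j × C₂ j)

variable (d₁ : ∀ j, C₁ j →ₗ[ℂ] C₁ (j + 1)) (d₂ : ∀ j, C₂ j →ₗ[ℂ] C₂ (j + 1))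
variable (r₁ : ∀ j, C₁ j →ₗ[ℂ] B j) (r₂ : ∀ j, C₂ j →ₗ[ℂ] B j) (θ : ℝ)

/-- The differential `d¹ ⊕ d²`. -/
def sumD (j : ℕ) : SumC C₁ C₂ j →ₗ[ℂ] SumC C₁ C₂ (j + 1) :=
  (WithLp.linearEquiv 2 ℂ (C₁ (j + 1) × C₂ (j + 1))).symm.toLinearMap ∘ₗ
    LinearMap.prodMap (d₁ j) (d₂ j) ∘ₗ
    (WithLp.linearEquiv 2 ℂ (C₁ j × C₂ j)).toLinearMap

/-- The constraint map whose kernel is `(C₁ ⊕_θ C₂)^j`,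
`(ξ₁, ξ₂) ↦ cos θ · r₁ ξ₁ - sin θ · r₂ ξ₂`. -/
def constraintMap (j : ℕ) : SumC C₁ C₂ j →ₗ[ℂ] B j :=
  ((Real.cos θ : ℂ) • (r₁ j ∘ₗ LinearMap.fst ℂ (C₁ j) (C₂ j))
      - (Real.sin θ : ℂ) • (r₂ j ∘ₗ LinearMap.snd ℂ (C₁ j) (C₂ j))) ∘ₗ
    (WithLp.linearEquiv 2 ℂ (C₁ j × C₂ j)).toLinearMap

/-- `(C₁ ⊕_θ C₂)^j = {(ξ₁,ξ₂) : cos θ · r₁ ξ₁ = sin θ · r₂ ξ₂}`. -/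
def Dtheta (j : ℕ) : Submodule ℂ (SumC C₁ C₂ j) :=
  LinearMap.ker (constraintMap C₁ C₂ B r₁ r₂ θ j)

/-- `α_θ : ker r₁ → C₁ ⊕_θ C₂`, `ξ ↦ (ξ, 0)`. -/
def alphaTheta (j : ℕ) : ↥(LinearMap.ker (r₁ j)) →ₗ[ℂ] ↥(Dtheta C₁ C₂ B r₁ r₂ θ j) :=
  LinearMap.codRestrict (Dtheta C₁ C₂ B r₁ r₂ θ j)
    ((WithLp.linearEquiv 2 ℂ (C₁ j × C₂ j)).symm.toLinearMap ∘ₗ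
      LinearMap.inl ℂ (C₁ j) (C₂ j) ∘ₗ (LinearMap.ker (r₁ j)).subtype)
    (fun x => by
      have hx : r₁ j x.1 = 0 := x.2
      simp [Dtheta, constraintMap, LinearMap.mem_ker, hx])

/-- `β_θ : C₁ ⊕_θ C₂ → C₂`, `(ξ₁, ξ₂) ↦ ξ₂`. -/
def betaTheta (j : ℕ) : ↥(Dtheta C₁ C₂ B r₁ r₂ θ j) →ₗ[ℂ] C₂ j :=
  (LinearMap.snd ℂ (C₁ j) (C₂ j) ∘ₗ (WithLp.linearEquiv 2 ℂ (C₁ j × C₂ j)).toLinearMap) ∘ₗ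
    (Dtheta C₁ C₂ B r₁ r₂ θ j).subtype

end

/-! The constraint map `φ (ξ₁, ξ₂) = cos θ • r₁ ξ₁ - sin θ • r₂ ξ₂` satisfies
`φ φ* = cos² θ • r₁ r₁* + sin² θ • r₂ r₂* = 1`, so the orthogonal projection onto
`C₁ ⊕_θ C₂ = ker φ` is `1 - φ* φ`. Compressing it to the second summand gives
`β_θ β_θ* = 1 - sin² θ • r₂* r₂`, and by the Weinstein–Aronszajn identity
`det (1 - sin² θ • r₂* r₂) = det (1 - sin² θ • r₂ r₂*) = (cos² θ) ^ dim B`. -/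

open LinearMap (adjoint det ker)

namespace LinearMap

variable {R M N : Type*} [CommRing R] [AddCommGroup M] [Module R M] [Module.Free R M]
  [Module.Finite R M] [AddCommGroup N] [Module R N] [Module.Free R N] [Module.Finite R N]

theorem det_id_add_comp_comm (f : M →ₗ[R] N) (g : N →ₗ[R] M) :
    det (id + g ∘ₗ f) = det (id + f ∘ₗ g) := by
  classical
  let bM := Module.Free.chooseBasis R M
  let bN := Module.Free.chooseBasis R N
  rw [← det_toMatrix bM, ← det_toMatrix bN, map_add, map_add, toMatrix_id, toMatrix_id,
    toMatrix_comp bM bN bM, toMatrix_comp bN bM bN, Matrix.det_one_add_mul_comm]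

theorem det_id_sub_smul_comp_of_comp_eq_id {s : N →ₗ[R] M} {r : M →ₗ[R] N}
    (hrs : r ∘ₗ s = id) (c : R) :
    det (id - c • (s ∘ₗ r)) = (1 - c) ^ Module.finrank R N := by
  have h := det_id_add_comp_comm r (-c • s)
  rw [smul_comp, comp_smul, hrs, neg_smul, ← sub_eq_add_neg] at h
  rw [h, show (id : N →ₗ[R] N) + -c • id = (1 - c) • id by module, det_smul, det_id, mul_one]

end LinearMap

section Adjoint

variable {𝕜 E E₁ E₂ F : Type*} [RCLike 𝕜]
  [NormedAddCommGroup E] [InnerProductSpace 𝕜 E]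
  [NormedAddCommGroup E₁] [InnerProductSpace 𝕜 E₁]
  [NormedAddCommGroup E₂] [InnerProductSpace 𝕜 E₂]
  [NormedAddCommGroup F] [InnerProductSpace 𝕜 F]

variable (𝕜) in
def l2Coprod (f₁ : E₁ →ₗ[𝕜] F) (f₂ : E₂ →ₗ[𝕜] F) : WithLp 2 (E₁ × E₂) →ₗ[𝕜] F :=
  f₁.coprod f₂ ∘ₗ (WithLp.linearEquiv 2 𝕜 (E₁ × E₂)).toLinearMap

def l2Prod (g₁ : F →ₗ[𝕜] E₁) (g₂ : F →ₗ[𝕜] E₂) : F →ₗ[𝕜] WithLp 2 (E₁ × E₂) :=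
  (WithLp.linearEquiv 2 𝕜 (E₁ × E₂)).symm.toLinearMap ∘ₗ g₁.prod g₂

@[simp]
theorem l2Coprod_apply (f₁ : E₁ →ₗ[𝕜] F) (f₂ : E₂ →ₗ[𝕜] F) (x : WithLp 2 (E₁ × E₂)) :
    l2Coprod 𝕜 f₁ f₂ x = f₁ x.fst + f₂ x.snd :=
  rfl

@[simp]
theorem l2Prod_apply (g₁ : F →ₗ[𝕜] E₁) (g₂ : F →ₗ[𝕜] E₂) (y : F) :
    l2Prod g₁ g₂ y = WithLp.toLp 2 (g₁ y, g₂ y) :=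
  rfl

theorem l2Coprod_comp_l2Prod (f₁ : E₁ →ₗ[𝕜] F) (f₂ : E₂ →ₗ[𝕜] F) (g₁ : E →ₗ[𝕜] E₁)
    (g₂ : E →ₗ[𝕜] E₂) : l2Coprod 𝕜 f₁ f₂ ∘ₗ l2Prod g₁ g₂ = f₁ ∘ₗ g₁ + f₂ ∘ₗ g₂ :=
  rfl

variable [FiniteDimensional 𝕜 E] [FiniteDimensional 𝕜 E₁] [FiniteDimensional 𝕜 E₂]
  [FiniteDimensional 𝕜 F]

theorem adjoint_l2Coprod (f₁ : E₁ →ₗ[𝕜] F) (f₂ : E₂ →ₗ[𝕜] F) :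
    adjoint (l2Coprod 𝕜 f₁ f₂) = l2Prod (adjoint f₁) (adjoint f₂) := by
  refine ((LinearMap.eq_adjoint_iff _ _).2 fun y x => ?_).symm
  simp [inner_add_right, LinearMap.adjoint_inner_left]

theorem subtype_comp_adjoint_subtype_ker {φ : E →ₗ[𝕜] F}
    (hφ : φ ∘ₗ adjoint φ = LinearMap.id) :
    (ker φ).subtype ∘ₗ adjoint (ker φ).subtype = LinearMap.id - adjoint φ ∘ₗ φ := by
  have hmem (x : E) : (LinearMap.id - adjoint φ ∘ₗ φ : E →ₗ[𝕜] E) x ∈ ker φ := by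
    simpa [sub_eq_zero] using (LinearMap.congr_fun hφ (φ x)).symm
  have hadj : adjoint (ker φ).subtype = (LinearMap.id - adjoint φ ∘ₗ φ).codRestrict _ hmem := by
    refine ((LinearMap.eq_adjoint_iff _ _).2 fun x k => ?_).symm
    have hk : φ k = 0 := k.2
    simp [inner_sub_left, LinearMap.adjoint_inner_left, hk]
  rw [hadj, LinearMap.subtype_comp_codRestrict]

end Adjoint

section Gluing

variable {C₁ C₂ B : ℕ → Type}
  [∀ j, NormedAddCommGroup (C₁ j)] [∀ j, InnerProductSpace ℂ (C₁ j)]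
  [∀ j, NormedAddCommGroup (C₂ j)] [∀ j, InnerProductSpace ℂ (C₂ j)]
  [∀ j, NormedAddCommGroup (B j)] [∀ j, InnerProductSpace ℂ (B j)]
  {r₁ : ∀ j, C₁ j →ₗ[ℂ] B j} {r₂ : ∀ j, C₂ j →ₗ[ℂ] B j} (θ : ℝ) (j : ℕ)

theorem constraintMap_eq_l2Coprod :
    constraintMap C₁ C₂ B r₁ r₂ θ j =
      l2Coprod ℂ ((Real.cos θ : ℂ) • r₁ j) (-(Real.sin θ : ℂ) • r₂ j) := by
  ext x
  simp [constraintMap, sub_eq_add_neg]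

theorem betaTheta_eq_l2Coprod_comp_subtype :
    betaTheta C₁ C₂ B r₁ r₂ θ j =
      l2Coprod ℂ 0 LinearMap.id ∘ₗ (Dtheta C₁ C₂ B r₁ r₂ θ j).subtype := by
  ext x
  simp [betaTheta]

variable [∀ j, FiniteDimensional ℂ (C₁ j)] [∀ j, FiniteDimensional ℂ (C₂ j)]
  [∀ j, FiniteDimensional ℂ (B j)] {θ j}

theorem constraintMap_comp_adjoint (h₁ : r₁ j ∘ₗ adjoint (r₁ j) = LinearMap.id)
    (h₂ : r₂ j ∘ₗ adjoint (r₂ j) = LinearMap.id) :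
    constraintMap C₁ C₂ B r₁ r₂ θ j ∘ₗ adjoint (constraintMap C₁ C₂ B r₁ r₂ θ j) =
      LinearMap.id := by
  rw [constraintMap_eq_l2Coprod, adjoint_l2Coprod, l2Coprod_comp_l2Prod, map_smulₛₗ, map_smulₛₗ,
    LinearMap.smul_comp, LinearMap.comp_smul, LinearMap.smul_comp, LinearMap.comp_smul, h₁, h₂,
    smul_smul, smul_smul, ← add_smul]
  convert one_smul ℂ _
  simp only [map_neg, Complex.conj_ofReal, neg_mul_neg]
  norm_cast
  linear_combination Real.cos_sq_add_sin_sq θ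

theorem betaTheta_comp_adjoint (h₁ : r₁ j ∘ₗ adjoint (r₁ j) = LinearMap.id)
    (h₂ : r₂ j ∘ₗ adjoint (r₂ j) = LinearMap.id) :
    betaTheta C₁ C₂ B r₁ r₂ θ j ∘ₗ adjoint (betaTheta C₁ C₂ B r₁ r₂ θ j) =
      LinearMap.id - ((Real.sin θ ^ 2 : ℝ) : ℂ) • (adjoint (r₂ j) ∘ₗ r₂ j) := by
  set ψ := l2Coprod ℂ (0 : C₁ j →ₗ[ℂ] C₂ j) LinearMap.id
  calc _ = ψ ∘ₗ ((Dtheta C₁ C₂ B r₁ r₂ θ j).subtype ∘ₗ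
          adjoint (Dtheta C₁ C₂ B r₁ r₂ θ j).subtype) ∘ₗ adjoint ψ := by
        rw [betaTheta_eq_l2Coprod_comp_subtype, LinearMap.adjoint_comp]; rfl
    _ = ψ ∘ₗ (LinearMap.id - adjoint (constraintMap C₁ C₂ B r₁ r₂ θ j) ∘ₗ
          constraintMap C₁ C₂ B r₁ r₂ θ j) ∘ₗ adjoint ψ := by
        rw [Dtheta, subtype_comp_adjoint_subtype_ker (constraintMap_comp_adjoint h₁ h₂)]
    _ = _ := by
        ext η
        simp [ψ, constraintMap_eq_l2Coprod, adjoint_l2Coprod, map_smulₛₗ, smul_smul, sq,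
          -Complex.ofReal_sin, -Complex.coe_smul]

end Gluing

theorem det_betaTheta_betaTheta_adjoint_general
    (C₁ C₂ B : ℕ → Type)
    [∀ j, NormedAddCommGroup (C₁ j)] [∀ j, InnerProductSpace ℂ (C₁ j)]
    [∀ j, FiniteDimensional ℂ (C₁ j)]
    [∀ j, NormedAddCommGroup (C₂ j)] [∀ j, InnerProductSpace ℂ (C₂ j)]
    [∀ j, FiniteDimensional ℂ (C₂ j)]
    [∀ j, NormedAddCommGroup (B j)] [∀ j, InnerProductSpace ℂ (B j)]
    [∀ j, FiniteDimensional ℂ (B j)]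
    (r₁ : ∀ j, C₁ j →ₗ[ℂ] B j) (r₂ : ∀ j, C₂ j →ₗ[ℂ] B j)
    (hpi₁ : ∀ j, r₁ j ∘ₗ LinearMap.adjoint (r₁ j) = LinearMap.id)
    (hpi₂ : ∀ j, r₂ j ∘ₗ LinearMap.adjoint (r₂ j) = LinearMap.id)
    (θ : ℝ) (hθ : 0 < θ) (hθ2 : θ < Real.pi / 2) (j : ℕ) :
    LinearMap.det
        (betaTheta C₁ C₂ B r₁ r₂ θ j ∘ₗ LinearMap.adjoint (betaTheta C₁ C₂ B r₁ r₂ θ j))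
      = ((1 + Real.tan θ ^ 2 : ℝ) : ℂ) ^ (-(Module.finrank ℂ (B j) : ℤ)) := by
  have hcos : Real.cos θ ≠ 0 := (Real.cos_pos_of_mem_Ioo ⟨by linarith [Real.pi_pos], hθ2⟩).ne'
  rw [betaTheta_comp_adjoint (hpi₁ j) (hpi₂ j),
    LinearMap.det_id_sub_smul_comp_of_comp_eq_id (hpi₂ j), zpow_neg, ← inv_zpow, zpow_natCast,
    ← Complex.ofReal_inv, Real.inv_one_add_tan_sq hcos, Real.cos_sq', Complex.ofReal_sub,
    Complex.ofReal_one]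

/-- if `r₁, r₂` are surjective chain maps and partial isometries
(`r_j r_j* = id`) and `0 < θ < π/2`, then for `β_θ : C₁ ⊕_θ C₂ → C₂`, `(ξ₁,ξ₂) ↦ ξ₂`:
`det(β_θ β_θ* : C₂^j → C₂^j) = (1 + tan²θ)^{-dim B^j}`. -/
theorem det_betaTheta_betaTheta_adjoint
    (C₁ C₂ B : ℕ → Type)
    [∀ j, NormedAddCommGroup (C₁ j)] [∀ j, InnerProductSpace ℂ (C₁ j)]
    [∀ j, FiniteDimensional ℂ (C₁ j)]
    [∀ j, NormedAddCommGroup (C₂ j)] [∀ j, InnerProductSpace ℂ (C₂ j)]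
    [∀ j, FiniteDimensional ℂ (C₂ j)]
    [∀ j, NormedAddCommGroup (B j)] [∀ j, InnerProductSpace ℂ (B j)]
    [∀ j, FiniteDimensional ℂ (B j)]
    (d₁ : ∀ j, C₁ j →ₗ[ℂ] C₁ (j + 1)) (d₂ : ∀ j, C₂ j →ₗ[ℂ] C₂ (j + 1))
    (dB : ∀ j, B j →ₗ[ℂ] B (j + 1))
    (hd₁ : ∀ j, d₁ (j + 1) ∘ₗ d₁ j = 0) (hd₂ : ∀ j, d₂ (j + 1) ∘ₗ d₂ j = 0)
    (hdB : ∀ j, dB (j + 1) ∘ₗ dB j = 0)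
    (r₁ : ∀ j, C₁ j →ₗ[ℂ] B j) (r₂ : ∀ j, C₂ j →ₗ[ℂ] B j)
    (hr₁ : ∀ j, Function.Surjective (r₁ j)) (hr₂ : ∀ j, Function.Surjective (r₂ j))
    (hchain₁ : ∀ j, dB j ∘ₗ r₁ j = r₁ (j + 1) ∘ₗ d₁ j)
    (hchain₂ : ∀ j, dB j ∘ₗ r₂ j = r₂ (j + 1) ∘ₗ d₂ j)
    (hpi₁ : ∀ j, r₁ j ∘ₗ LinearMap.adjoint (r₁ j) = LinearMap.id)
    (hpi₂ : ∀ j, r₂ j ∘ₗ LinearMap.adjoint (r₂ j) = LinearMap.id)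
    (θ : ℝ) (hθ : 0 < θ) (hθ2 : θ < Real.pi / 2) (j : ℕ) :
    LinearMap.det
        (betaTheta C₁ C₂ B r₁ r₂ θ j ∘ₗ LinearMap.adjoint (betaTheta C₁ C₂ B r₁ r₂ θ j))
      = ((1 + Real.tan θ ^ 2 : ℝ) : ℂ) ^ (-(Module.finrank ℂ (B j) : ℤ)) :=
  det_betaTheta_betaTheta_adjoint_general C₁ C₂ B r₁ r₂ hpi₁ hpi₂ θ hθ hθ2 j

end
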